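/- arXiv:2602.21446 — 2 statements merged into one kernel-verified Lean document; each statement's English description precedes it below -/
import Mathlib

section
/- Let (X_1,Y_1),…,(X_{n+1},Y_{n+1}) be exchangeable random pairs taking values in 𝒳 × {1,…,K}, let Ŝ : 𝒳 × {1,…,K} → ℝ be a fixed measurable nonconformity score function, and fix α ∈ (0,1). Assume the scores Ŝ(X_1,Y_1),…,Ŝ(X_{n+1},Y_{n+1}) are almost surely pairwise distinct. With 𝒟^y, Q̂^y_{1−α}, and Ĉ_α(X_{n+1}) defined as in the label-conditional procedure, for every y ∈ {1,…,K} and every integer m ≥ 0 such that ℙ(Y_{n+1} = y and |𝒟^y| = m) > 0, we have ℙ(Y_{n+1} ∈ Ĉ_α(X_{n+1}) ∣ Y_{n+1} = y, |𝒟^y| = m) ≤ 1 − α + 1/(1+m). -/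
/-!
Write `Z_i = (X_i, Y_i)`. On the event that the test point `Z_{n+1}` has label `y` and exactly `m`
calibration points do, there are `m + 1` points of label `y`, and the test point is covered only
if fewer than `k = ⌈(1-α)(1+m)⌉` of the other label-`y` scores lie strictly below its own (its
score is at most the `k`-th smallest calibration score, or `k > m`). Since the scores are a.s.
distinct, at most `k` of the `m + 1` label-`y` points have this property, and by exchangeability
each of them is the test point equally often; hence the conditional coverage is at most
`k / (m + 1) ≤ 1 - α + 1 / (1 + m)`.
-/

open MeasureTheory ProbabilityTheory

/-- The `k`-th smallest value (1-indexed) of a list of reals. -/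
noncomputable def kthSmallestL (l : List ℝ) (k : ℕ) : ℝ :=
  (l.mergeSort (fun a b => a ≤ b)).getD (k - 1) 0

open Finset
open scoped ENNReal

lemma countP_lt_of_le_kthSmallestL {l : List ℝ} {k : ℕ} (hk : 1 ≤ k) (hkl : k ≤ l.length)
    {t : ℝ} (ht : t ≤ kthSmallestL l k) : l.countP (fun a => decide (a < t)) < k := by
  set l' := l.mergeSort (fun a b => a ≤ b)
  have hperm : l'.Perm l := List.mergeSort_perm l _
  have hlt : k - 1 < l'.length := by rw [hperm.length_eq]; omega
  have hsorted : l'.Pairwise (· ≤ ·) := by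
    simpa using List.pairwise_mergeSort (le := fun a b : ℝ => decide (a ≤ b))
      (fun a b c hab hbc => by simp_all only [decide_eq_true_eq]; exact hab.trans hbc)
      (fun a b => by simpa using le_total a b) l
  have htail : ∀ a ∈ l'.drop (k - 1), t ≤ a := by
    have hpw := hsorted.drop (i := k - 1)
    rw [List.drop_eq_getElem_cons hlt, List.pairwise_cons] at hpw
    rw [kthSmallestL, List.getD_eq_getElem _ _ hlt] at ht
    rw [List.drop_eq_getElem_cons hlt]
    simp only [List.mem_cons, forall_eq_or_imp]
    exact ⟨ht, fun a ha => ht.trans (hpw.1 a ha)⟩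
  have hdrop : (l'.drop (k - 1)).countP (fun a => decide (a < t)) = 0 :=
    List.countP_eq_zero.mpr fun a ha => by simpa using htail a ha
  rw [← hperm.countP_eq, ← List.take_append_drop (k - 1) l', List.countP_append, hdrop]
  have := (l'.take (k - 1)).countP_le_length (p := fun a => decide (a < t))
  simp only [List.length_take] at this
  omega

lemma Fin.card_filter_univ_castSucc {n : ℕ} (q : Fin (n + 1) → Prop) [DecidablePred q] :
    #{i | q i} = #{i : Fin n | q i.castSucc} + if q (Fin.last n) then 1 else 0 := by
  simp only [card_filter, Fin.sum_univ_castSucc]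

lemma List.countP_finRange {n : ℕ} (q : Fin n → Prop) [DecidablePred q] :
    (List.finRange n).countP (fun i => decide (q i)) = #{i | q i} := by
  simp [Finset.card_def, Finset.filter_val, Finset.val_univ_fin, List.countP_eq_length_filter]

section Ranks

variable {β : Type*} {N : ℕ}

def labelCount (p : β → Prop) [DecidablePred p] (w : Fin N → β) : ℕ :=
  #{i | p (w i)}

noncomputable def labelRank (s : β → ℝ) (p : β → Prop) [DecidablePred p] (w : Fin N → β)
    (j : Fin N) : ℕ :=
  #{i | p (w i) ∧ s (w i) < s (w j)}

def labelledCalibration {n : ℕ} (p : β → Prop) [DecidablePred p] (w : Fin (n + 1) → β) :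
    List (Fin n) :=
  (List.finRange n).filter fun i => p (w i.castSucc)

variable {s : β → ℝ} {p : β → Prop} [DecidablePred p]

lemma labelCount_comp_perm (w : Fin N → β) (π : Equiv.Perm (Fin N)) :
    labelCount p (fun i => w (π i)) = labelCount p w := by
  simp only [labelCount, card_filter]
  exact Equiv.sum_comp π fun i => if p (w i) then 1 else 0

lemma labelRank_comp_perm (w : Fin N → β) (π : Equiv.Perm (Fin N)) (j : Fin N) :
    labelRank s p (fun i => w (π i)) j = labelRank s p w (π j) := by
  simp only [labelRank, card_filter]
  exact Equiv.sum_comp π fun i => if p (w i) ∧ s (w i) < s (w (π j)) then 1 else 0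

/-- If more than `k` labelled points had rank `< k`, the highest-scoring of them would have the
others, at least `k` labelled points, below it. -/
lemma card_labelRank_lt_le (w : Fin N → β) (hw : ∀ i j, i ≠ j → s (w i) ≠ s (w j))
    (k : ℕ) : #{j | p (w j) ∧ labelRank s p w j < k} ≤ k := by
  set T : Finset (Fin N) := {j | p (w j) ∧ labelRank s p w j < k}
  by_contra! hT
  obtain ⟨j, hjT, hjmax⟩ := T.exists_max_image (s ∘ w) (card_pos.mp (by omega))
  have hbelow : T.erase j ⊆ ({i | p (w i) ∧ s (w i) < s (w j)} : Finset _) := by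
    intro i hi
    obtain ⟨hij, hiT⟩ := mem_erase.mp hi
    simp only [T, mem_filter, mem_univ, true_and] at hiT ⊢
    exact ⟨hiT.1, (hjmax i (by simpa [T] using hiT)).lt_of_ne (hw i j hij)⟩
  have hcard := card_le_card hbelow
  rw [card_erase_of_mem hjT] at hcard
  simp only [T, mem_filter, mem_univ, true_and] at hjT
  have := hcard.trans_lt hjT.2
  omega

lemma labelCount_eq_length_labelledCalibration_add {n : ℕ} (w : Fin (n + 1) → β) :
    labelCount p w = (labelledCalibration p w).length + if p (w (Fin.last n)) then 1 else 0 := by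
  rw [labelCount, Fin.card_filter_univ_castSucc, labelledCalibration,
    ← List.countP_eq_length_filter, List.countP_finRange]

lemma labelRank_last_eq_countP {n : ℕ} (w : Fin (n + 1) → β) :
    labelRank s p w (Fin.last n) =
      ((labelledCalibration p w).map (fun i => s (w i.castSucc))).countP
        (fun a => decide (a < s (w (Fin.last n)))) := by
  rw [labelRank, Fin.card_filter_univ_castSucc, labelledCalibration, List.countP_map,
    List.countP_filter]
  simp [← List.countP_finRange, Bool.and_comm]

lemma labelRank_last_lt_of_le_quantile {n m : ℕ} (w : Fin (n + 1) → β) {q : ℤ} (hq : 0 < q)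
    (hlen : (labelledCalibration p w).length = m)
    (ht : (s (w (Fin.last n)) : EReal) ≤ if q ≤ m then
      ((kthSmallestL ((labelledCalibration p w).map (fun i => s (w i.castSucc))) q.toNat : ℝ) :
        EReal) else ⊤) :
    labelRank s p w (Fin.last n) < q.toNat := by
  rw [labelRank_last_eq_countP]
  split_ifs at ht with hqm
  · exact countP_lt_of_le_kthSmallestL (by omega) (by simp; omega) (EReal.coe_le_coe_iff.mp ht)
  · exact List.countP_le_length.trans_lt (by simp; omega)

end Ranks

lemma measurable_card_filter {α ι : Type*} [MeasurableSpace α] [Fintype ι]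
    (q : ι → α → Prop) [∀ i, DecidablePred (q i)] (hq : ∀ i, MeasurableSet {a | q i a}) :
    Measurable fun a => #{i | q i a} := by
  simp only [card_filter]
  exact Finset.measurable_sum _ fun i _ => Measurable.ite (hq i) measurable_const measurable_const

section Exchangeable

variable {β : Type*} [MeasurableSpace β] {N : ℕ} {μ : Measure (Fin N → β)}

lemma measure_setOf_eq_of_equivariant
    (hμ : ∀ π : Equiv.Perm (Fin N), μ.map (fun w i => w (π i)) = μ)
    {F : (Fin N → β) → Fin N → Prop}
    (hF : ∀ (π : Equiv.Perm (Fin N)) w j, F (fun i => w (π i)) j ↔ F w (π j))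
    {j' : Fin N} (hFm : MeasurableSet {w | F w j'}) (j : Fin N) :
    μ {w | F w j} = μ {w | F w j'} := by
  have hpre : {w | F w j} = (fun w i => w (Equiv.swap j' j i)) ⁻¹' {w | F w j'} := by
    ext w
    simp [hF _ w j']
  rw [hpre, ← Measure.map_apply (by fun_prop) hFm, hμ]

lemma card_mul_measure_eq_lintegral_card
    (hμ : ∀ π : Equiv.Perm (Fin N), μ.map (fun w i => w (π i)) = μ)
    {F : (Fin N → β) → Fin N → Prop} [∀ w, DecidablePred (F w)]
    (hF : ∀ (π : Equiv.Perm (Fin N)) w j, F (fun i => w (π i)) j ↔ F w (π j))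
    (hFm : ∀ j, MeasurableSet {w | F w j}) (j₀ : Fin N) :
    (N : ℝ≥0∞) * μ {w | F w j₀} = ∫⁻ w, (#{j | F w j} : ℝ≥0∞) ∂μ := by
  calc (N : ℝ≥0∞) * μ {w | F w j₀}
      = ∑ j, ∫⁻ w, {w | F w j}.indicator 1 w ∂μ := by
        simp [lintegral_indicator_one (hFm _), measure_setOf_eq_of_equivariant hμ hF (hFm j₀)]
    _ = ∫⁻ w, ∑ j, {w | F w j}.indicator 1 w ∂μ :=
        (lintegral_finsetSum _ fun j _ => measurable_one.indicator (hFm j)).symm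
    _ = ∫⁻ w, (#{j | F w j} : ℝ≥0∞) ∂μ := by
        simp only [natCast_card_filter, Set.indicator_apply, Set.mem_ofPred_eq, Pi.one_apply]

variable {s : β → ℝ} {p : β → Prop} [DecidablePred p]

lemma measurable_labelCount (hp : MeasurableSet {b | p b}) :
    Measurable (labelCount p : (Fin N → β) → ℕ) :=
  measurable_card_filter (fun i (w : Fin N → β) => p (w i)) fun i =>
    hp.preimage (measurable_pi_apply i)

lemma measurable_labelRank (hs : Measurable s) (hp : MeasurableSet {b | p b}) (j : Fin N) :
    Measurable fun w : Fin N → β => labelRank s p w j :=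
  measurable_card_filter (fun i (w : Fin N → β) => p (w i) ∧ s (w i) < s (w j)) fun i =>
    (hp.preimage (measurable_pi_apply i)).inter
      (measurableSet_lt (hs.comp (measurable_pi_apply i)) (hs.comp (measurable_pi_apply j)))

lemma measurableSet_labelled (hp : MeasurableSet {b | p b}) (j₀ : Fin N) (c : ℕ) :
    MeasurableSet {w : Fin N → β | p (w j₀) ∧ labelCount p w = c} :=
  (hp.preimage (measurable_pi_apply j₀)).inter
    (measurable_labelCount hp (measurableSet_singleton c))

lemma mul_measure_labelRank_lt_le
    (hμ : ∀ π : Equiv.Perm (Fin N), μ.map (fun w i => w (π i)) = μ)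
    (hs : Measurable s) (hp : MeasurableSet {b | p b})
    (hdist : ∀ᵐ w ∂μ, ∀ i j, i ≠ j → s (w i) ≠ s (w j)) (c k : ℕ) (j₀ : Fin N) :
    (c : ℝ≥0∞) * μ {w | p (w j₀) ∧ labelCount p w = c ∧ labelRank s p w j₀ < k}
      ≤ k * μ {w | p (w j₀) ∧ labelCount p w = c} := by
  set G : Set (Fin N → β) := {w | labelCount p w = c}
  have hG : MeasurableSet G := measurable_labelCount hp (measurableSet_singleton c)
  have hN : (N : ℝ≥0∞) ≠ 0 := by simpa using j₀.pos.ne'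
  have hlabelled : (N : ℝ≥0∞) * μ {w | p (w j₀) ∧ labelCount p w = c} = c * μ G := by
    rw [card_mul_measure_eq_lintegral_card hμ (F := fun w j => p (w j) ∧ labelCount p w = c)
      (fun π w j => by simp [labelCount_comp_perm]) (measurableSet_labelled hp · c),
      ← lintegral_indicator_const hG]
    refine lintegral_congr fun w => ?_
    by_cases hw : labelCount p w = c
    · simp [Set.indicator_of_mem (show w ∈ G from hw), ← hw, labelCount]
    · simp [hw, Set.indicator_of_notMem (show w ∉ G from hw)]
  have hlow :
      (N : ℝ≥0∞) * μ {w | p (w j₀) ∧ labelCount p w = c ∧ labelRank s p w j₀ < k} ≤ k * μ G := by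
    rw [card_mul_measure_eq_lintegral_card hμ
      (F := fun w j => p (w j) ∧ labelCount p w = c ∧ labelRank s p w j < k)
      (fun π w j => by simp [labelCount_comp_perm, labelRank_comp_perm])
      (fun j => (hp.preimage (measurable_pi_apply j)).inter
        (hG.inter (measurable_labelRank hs hp j measurableSet_Iio))),
      ← lintegral_indicator_const hG]
    refine lintegral_mono_ae (hdist.mono fun w hw => ?_)
    by_cases hwG : labelCount p w = c
    · rw [Set.indicator_of_mem (show w ∈ G from hwG)]
      exact_mod_cast (card_le_card fun j => by simp [hwG]; tauto).trans
        (card_labelRank_lt_le w hw k)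
    · simp [hwG]
  rw [← ENNReal.mul_le_mul_iff_right hN (ENNReal.natCast_ne_top N)]
  calc (N : ℝ≥0∞) * (c * μ {w | p (w j₀) ∧ labelCount p w = c ∧ labelRank s p w j₀ < k})
      = c * (N * μ {w | p (w j₀) ∧ labelCount p w = c ∧ labelRank s p w j₀ < k}) :=
        mul_left_comm _ _ _
    _ ≤ c * (k * μ G) := by gcongr
    _ = N * (k * μ {w | p (w j₀) ∧ labelCount p w = c}) := by
        rw [mul_left_comm, ← hlabelled, mul_left_comm]

lemma mul_measure_labelRank_lt_le_of_exchangeable {Ω : Type*} [MeasurableSpace Ω]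
    {P : Measure Ω} {Z : Ω → Fin N → β} (hZ : Measurable Z)
    (hexch : ∀ π : Equiv.Perm (Fin N), P.map (fun ω i => Z ω (π i)) = P.map Z)
    (hs : Measurable s) (hp : MeasurableSet {b | p b})
    (hdist : ∀ᵐ ω ∂P, ∀ i j, i ≠ j → s (Z ω i) ≠ s (Z ω j)) (c k : ℕ) (j₀ : Fin N) :
    (c : ℝ≥0∞) * P {ω | p (Z ω j₀) ∧ labelCount p (Z ω) = c ∧ labelRank s p (Z ω) j₀ < k}
      ≤ k * P {ω | p (Z ω j₀) ∧ labelCount p (Z ω) = c} := by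
  have hμ : ∀ π : Equiv.Perm (Fin N), (P.map Z).map (fun w i => w (π i)) = P.map Z :=
    fun π => by rw [Measure.map_map (by fun_prop) hZ]; exact hexch π
  have hbound := mul_measure_labelRank_lt_le hμ hs hp
    ((ae_map_iff hZ.aemeasurable (by measurability)).mpr hdist) c k j₀
  rw [Measure.map_apply hZ (measurableSet_labelled hp j₀ c)] at hbound
  exact (mul_le_mul_right (Measure.le_map_apply hZ.aemeasurable _) _).trans hbound

end Exchangeable

lemma natCast_ceil_toNat_div_le {x : ℝ} (hx : 0 ≤ x) (m : ℕ) :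
    (⌈x * (1 + m)⌉.toNat : ℝ≥0∞) / (m + 1 : ℕ) ≤ ENNReal.ofReal (x + 1 / (1 + m)) := by
  have hm : (0 : ℝ) < 1 + m := by positivity
  have hceil : (⌈x * (1 + m)⌉.toNat : ℝ) ≤ (x + 1 / (1 + m)) * (1 + m) := by
    have hk : ((⌈x * (1 + m)⌉.toNat : ℕ) : ℝ) = ⌈x * (1 + m)⌉ := by
      exact_mod_cast Int.toNat_of_nonneg (Int.ceil_nonneg (by positivity))
    rw [hk, add_mul, one_div, inv_mul_cancel₀ hm.ne']
    exact (Int.ceil_lt_add_one _).le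
  refine ENNReal.div_le_of_le_mul ?_
  rw [← ENNReal.ofReal_natCast, ← ENNReal.ofReal_natCast, ← ENNReal.ofReal_mul (by positivity)]
  exact ENNReal.ofReal_le_ofReal (by push_cast; linarith)

lemma cond_le_div_of_mul_le {Ω : Type*} [MeasurableSpace Ω] {P : Measure Ω} [IsFiniteMeasure P]
    {A B : Set Ω} (hB : MeasurableSet B) (hB0 : P B ≠ 0) {a b : ℝ≥0∞} (hb0 : b ≠ 0)
    (hb : b ≠ ∞) (h : b * P (B ∩ A) ≤ a * P B) : P[A|B] ≤ a / b := by
  rw [cond_apply hB, ENNReal.le_div_iff_mul_le (Or.inl hb0) (Or.inl hb)]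
  calc (P B)⁻¹ * P (B ∩ A) * b = (P B)⁻¹ * (b * P (B ∩ A)) := by ring
    _ ≤ (P B)⁻¹ * (a * P B) := by gcongr
    _ = a := by
        rw [mul_comm a, ← mul_assoc, ENNReal.inv_mul_cancel hB0 (measure_ne_top _ _), one_mul]

theorem split_conformal_label_conditional_coverage_upper_general
    {Ω : Type*} [MeasurableSpace Ω] (P : Measure Ω) [IsProbabilityMeasure P]
    {𝒳 : Type*} [MeasurableSpace 𝒳] (K : ℕ) (n : ℕ)
    (X : Fin (n + 1) → Ω → 𝒳) (Y : Fin (n + 1) → Ω → Fin K)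
    (hmeas : ∀ i, Measurable (fun ω => (X i ω, Y i ω)))
    (hexch : ∀ π : Equiv.Perm (Fin (n + 1)),
      Measure.map (fun ω => fun i => (X (π i) ω, Y (π i) ω)) P
        = Measure.map (fun ω => fun i => (X i ω, Y i ω)) P)
    (S : 𝒳 × Fin K → ℝ) (hS : Measurable S)
    (hdistinct : P {ω | ∀ i j : Fin (n + 1), i ≠ j →
      S (X i ω, Y i ω) ≠ S (X j ω, Y j ω)} = 1)
    (α : ℝ) (hα : α ∈ Set.Ioo (0 : ℝ) 1)
    -- `D y ω` is the list of calibration indices `i ∈ {1,…,n}` whose label is `y`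
    (D : Fin K → Ω → List (Fin n))
    (hD : ∀ y ω, D y ω = (List.finRange n).filter (fun i => Y i.castSucc ω = y))
    -- label-wise calibrated quantiles
    (Qhat : Fin K → Ω → EReal)
    (hQ : ∀ y ω, Qhat y ω =
      if ⌈(1 - α) * (1 + (D y ω).length)⌉ ≤ ((D y ω).length : ℤ) then
        ((kthSmallestL ((D y ω).map (fun i => S (X i.castSucc ω, Y i.castSucc ω)))
            (⌈(1 - α) * (1 + (D y ω).length)⌉.toNat) : ℝ) : EReal)
      else ⊤)
    (C : Ω → Set (Fin K))
    (hC : ∀ ω, C ω = {y : Fin K | (S (X (Fin.last n) ω, y) : EReal) ≤ Qhat y ω}) :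
    ∀ (y : Fin K) (m : ℕ),
      P {ω | Y (Fin.last n) ω = y ∧ (D y ω).length = m} ≠ 0 →
      P[{ω | Y (Fin.last n) ω ∈ C ω} | {ω | Y (Fin.last n) ω = y ∧ (D y ω).length = m}]
        ≤ ENNReal.ofReal (1 - α + 1 / (1 + m)) := by
  intro y m hPB
  set Z : Ω → Fin (n + 1) → 𝒳 × Fin K := fun ω i => (X i ω, Y i ω)
  set p : 𝒳 × Fin K → Prop := fun b => b.2 = y
  set k := ⌈(1 - α) * (1 + m)⌉.toNat
  set B := {ω | Y (Fin.last n) ω = y ∧ (D y ω).length = m}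
  have hZ : Measurable Z := measurable_pi_lambda _ hmeas
  have hp : MeasurableSet {b | p b} := measurable_snd (measurableSet_singleton y)
  have hB : B = {ω | p (Z ω (Fin.last n)) ∧ labelCount p (Z ω) = m + 1} := by
    ext ω
    simp +contextual [B, Z, p, hD, labelCount_eq_length_labelledCalibration_add,
      labelledCalibration]
  have hcov : B ∩ {ω | Y (Fin.last n) ω ∈ C ω} ⊆ {ω | p (Z ω (Fin.last n))
      ∧ labelCount p (Z ω) = m + 1 ∧ labelRank S p (Z ω) (Fin.last n) < k} := by
    rintro ω ⟨hωB, hωC⟩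
    obtain ⟨hlast, hcount⟩ : ω ∈ {ω | p (Z ω (Fin.last n)) ∧ labelCount p (Z ω) = m + 1} :=
      hB ▸ hωB
    obtain ⟨hy, hlen⟩ := hωB
    have hscore : S (Z ω (Fin.last n)) = S (X (Fin.last n) ω, y) := by simp [Z, hy]
    rw [Set.mem_ofPred_eq, hC, Set.mem_ofPred_eq, hy, hQ, hlen, hD, ← hscore] at hωC
    refine ⟨hlast, hcount, labelRank_last_lt_of_le_quantile (Z ω) ?_ (by rw [← hlen, hD]; rfl) hωC⟩
    exact Int.ceil_pos.mpr (mul_pos (by linarith [hα.2]) (by positivity))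
  have hcovered : ((m + 1 : ℕ) : ℝ≥0∞) * P (B ∩ {ω | Y (Fin.last n) ω ∈ C ω}) ≤ k * P B := by
    refine (mul_le_mul_right (measure_mono hcov) _).trans ?_
    rw [hB]
    exact mul_measure_labelRank_lt_le_of_exchangeable hZ hexch hS hp
      ((ae_iff_measure_eq (by measurability)).mpr (hdistinct.trans measure_univ.symm))
      (m + 1) k (Fin.last n)
  calc P[{ω | Y (Fin.last n) ω ∈ C ω} | B] ≤ k / (m + 1 : ℕ) :=
        cond_le_div_of_mul_le (hB ▸ hZ (measurableSet_labelled hp _ _)) hPB (by simp) (by simp)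
          hcovered
    _ ≤ ENNReal.ofReal (1 - α + 1 / (1 + m)) := natCast_ceil_toNat_div_le (by linarith [hα.2]) m

/-- **Label-conditional split conformal prediction, anti-conservative upper bound
(Theorem 3.2).** -/
theorem split_conformal_label_conditional_coverage_upper
    {Ω : Type*} [MeasurableSpace Ω] (P : Measure Ω) [IsProbabilityMeasure P]
    {𝒳 : Type*} [MeasurableSpace 𝒳] (K : ℕ) (hK : 1 ≤ K) (n : ℕ)
    (X : Fin (n + 1) → Ω → 𝒳) (Y : Fin (n + 1) → Ω → Fin K)
    (hmeas : ∀ i, Measurable (fun ω => (X i ω, Y i ω)))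
    (hexch : ∀ π : Equiv.Perm (Fin (n + 1)),
      Measure.map (fun ω => fun i => (X (π i) ω, Y (π i) ω)) P
        = Measure.map (fun ω => fun i => (X i ω, Y i ω)) P)
    (S : 𝒳 × Fin K → ℝ) (hS : Measurable S)
    (hdistinct : P {ω | ∀ i j : Fin (n + 1), i ≠ j →
      S (X i ω, Y i ω) ≠ S (X j ω, Y j ω)} = 1)
    (α : ℝ) (hα : α ∈ Set.Ioo (0 : ℝ) 1)
    -- `D y ω` is the list of calibration indices `i ∈ {1,…,n}` whose label is `y`
    (D : Fin K → Ω → List (Fin n))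
    (hD : ∀ y ω, D y ω = (List.finRange n).filter (fun i => Y i.castSucc ω = y))
    -- label-wise calibrated quantiles
    (Qhat : Fin K → Ω → EReal)
    (hQ : ∀ y ω, Qhat y ω =
      if ⌈(1 - α) * (1 + (D y ω).length)⌉ ≤ ((D y ω).length : ℤ) then
        ((kthSmallestL ((D y ω).map (fun i => S (X i.castSucc ω, Y i.castSucc ω)))
            (⌈(1 - α) * (1 + (D y ω).length)⌉.toNat) : ℝ) : EReal)
      else ⊤)
    (C : Ω → Set (Fin K))
    (hC : ∀ ω, C ω = {y : Fin K | (S (X (Fin.last n) ω, y) : EReal) ≤ Qhat y ω}) :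
    ∀ (y : Fin K) (m : ℕ),
      P {ω | Y (Fin.last n) ω = y ∧ (D y ω).length = m} ≠ 0 →
      P[{ω | Y (Fin.last n) ω ∈ C ω} | {ω | Y (Fin.last n) ω = y ∧ (D y ω).length = m}]
        ≤ ENNReal.ofReal (1 - α + 1 / (1 + m)) :=
  split_conformal_label_conditional_coverage_upper_general P K n X Y hmeas hexch S hS hdistinct α hα
    D hD Qhat hQ C hC
end

section
/- Let S_1,…,S_{n+1} be exchangeable real-valued random variables and let k ∈ {1,…,n}. Let S_{(k)} denote the k-th smallest value among S_1,…,S_n. Then ℙ(S_{n+1} ≤ S_{(k)}) ≥ k/(n+1). -/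
open MeasureTheory

/-- The `k`-th smallest value (1-indexed) of a tuple of reals. -/
noncomputable def kthSmallest {n : ℕ} (s : Fin n → ℝ) (k : ℕ) : ℝ :=
  ((List.ofFn s).mergeSort (fun a b => a ≤ b)).getD (k - 1) 0

/-!
Call an index `j` good for a vector `t` if fewer than `k` coordinates of `t` lie strictly below
`t j`. Among `n + 1 ≥ k` indices at least `k` are good, so the probabilities that the
individual indices are good add up to at least `k`. By exchangeability these probabilities are
all equal, hence each is at least `k / (n + 1)`. Finally, if the index `n + 1` is good, fewer
than `k` of `S_1, …, S_n` lie below `S_{n+1}`, which forces `S_{n+1} ≤ S_{(k)}`.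
-/

open Finset

theorem List.Pairwise.le_getElem_of_countP_le {α : Type*} [LinearOrder α] {l : List α}
    (hl : l.Pairwise (· ≤ ·)) {x : α} {i : ℕ} (hi : i < l.length)
    (hcount : l.countP (· < x) ≤ i) : x ≤ l[i] := by
  induction l generalizing i with
  | nil => simp at hi
  | cons a l ih =>
    rw [List.pairwise_cons] at hl
    cases i with
    | zero =>
      by_contra! hax
      rw [List.getElem_cons_zero] at hax
      simp [hax] at hcount
    | succ i =>
      by_cases hax : a < x
      · simp only [List.countP_cons, hax, decide_true, if_true] at hcount
        exact ih hl.2 _ (by omega)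
      · exact (not_lt.mp hax).trans (hl.1 _ (List.getElem_mem _))

theorem List.countP_ofFn {α : Type*} {n : ℕ} (v : Fin n → α) (p : α → Prop)
    [DecidablePred p] :
    (List.ofFn v).countP (fun a => decide (p a)) = #{i | p (v i)} := by
  rw [← Multiset.coe_countP, ← Fin.univ_val_map, Multiset.countP_map]
  rfl

theorem le_kthSmallest_of_card_lt {n k : ℕ} (v : Fin n → ℝ) {x : ℝ} (hkn : k ≤ n)
    (hcount : #{i | v i < x} < k) : x ≤ kthSmallest v k := by
  have hlen : ((List.ofFn v).mergeSort (fun a b => a ≤ b)).length = n := by simp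
  rw [kthSmallest, List.getD_eq_getElem _ _ (by omega)]
  refine (List.pairwise_mergeSort' (· ≤ ·) _).le_getElem_of_countP_le _ ?_
  rw [(List.mergeSort_perm _ _).countP_eq, List.countP_ofFn]
  omega

section StrictRank

variable {ι α : Type*} [Fintype ι] [LinearOrder α]

def strictRank (t : ι → α) (j : ι) : ℕ := #{i | t i < t j}

theorem strictRank_comp_perm (t : ι → α) (π : Equiv.Perm ι) (j : ι) :
    strictRank (t ∘ π) j = strictRank t (π j) :=
  card_equiv π (by simp)

theorem le_card_strictRank_lt (t : ι → α) {k : ℕ} (hk : k ≤ Fintype.card ι) :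
    k ≤ #{j | strictRank t j < k} := by
  by_contra! hfew
  obtain ⟨j₁, hj₁⟩ : ∃ j, k ≤ strictRank t j := by
    by_contra! hall
    rw [filter_true_of_mem fun j _ => hall j, card_univ] at hfew
    omega
  obtain ⟨j₀, hj₀, hmin⟩ :=
    exists_min_image {j | k ≤ strictRank t j} t ⟨j₁, mem_filter.mpr ⟨mem_univ _, hj₁⟩⟩
  -- every index whose value lies strictly below the least bad value is good
  have hj₀_rank : strictRank t j₀ ≤ #{j | strictRank t j < k} := by
    refine card_le_card fun i hi => ?_
    simp only [mem_filter, mem_univ, true_and] at hi hmin ⊢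
    by_contra! hi_bad
    exact absurd hi (not_lt.mpr (hmin i hi_bad))
  simp only [mem_filter, mem_univ, true_and] at hj₀
  omega

end StrictRank

section Exchangeable

variable {ι α : Type*} [Fintype ι] [LinearOrder α] [TopologicalSpace α]
  [OrderClosedTopology α] [SecondCountableTopology α] [MeasurableSpace α]
  [OpensMeasurableSpace α]

theorem measurableSet_strictRank_lt (j : ι) (k : ℕ) :
    MeasurableSet {t : ι → α | strictRank t j < k} := by
  have : Measurable fun t : ι → α => strictRank t j := by
    simp only [strictRank, card_filter]
    exact Finset.measurable_sum _ fun i _ =>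
      Measurable.ite (measurableSet_lt (measurable_pi_apply i) (measurable_pi_apply j))
        measurable_const measurable_const
  exact this measurableSet_Iio

theorem measure_strictRank_lt_eq {μ : Measure (ι → α)}
    (hμ : ∀ π : Equiv.Perm ι, μ.map (· ∘ π) = μ) (k : ℕ) (i j : ι) :
    μ {t | strictRank t i < k} = μ {t | strictRank t j < k} := by
  classical
  calc μ {t | strictRank t i < k} = μ.map (· ∘ Equiv.swap i j) {t | strictRank t i < k} := by
        rw [hμ]
    _ = μ {t | strictRank t j < k} := by
        rw [Measure.map_apply (by fun_prop) (measurableSet_strictRank_lt i k)]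
        simp [Set.preimage, strictRank_comp_perm]

theorem mul_measure_univ_le_sum_measure_strictRank_lt (μ : Measure (ι → α)) {k : ℕ}
    (hk : k ≤ Fintype.card ι) :
    k * μ Set.univ ≤ ∑ j, μ {t | strictRank t j < k} := by
  calc k * μ Set.univ = ∫⁻ _, (k : ENNReal) ∂μ := (lintegral_const _).symm
    _ ≤ ∫⁻ t, ∑ j, {t | strictRank t j < k}.indicator 1 t ∂μ := by
      refine lintegral_mono fun t => ?_
      simp only [Set.indicator_apply, Set.mem_ofPred_eq, Pi.one_apply, sum_boole]
      exact_mod_cast le_card_strictRank_lt t hk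
    _ = ∑ j, μ {t | strictRank t j < k} := by
      rw [lintegral_finsetSum _ fun j _ =>
        measurable_one.indicator (measurableSet_strictRank_lt j k)]
      simp only [lintegral_indicator_one (measurableSet_strictRank_lt _ k)]

theorem mul_measure_univ_le_card_mul_measure_strictRank_lt {μ : Measure (ι → α)}
    (hμ : ∀ π : Equiv.Perm ι, μ.map (· ∘ π) = μ) {k : ℕ} (hk : k ≤ Fintype.card ι)
    (j : ι) : k * μ Set.univ ≤ Fintype.card ι * μ {t | strictRank t j < k} := by
  calc k * μ Set.univ ≤ ∑ i, μ {t | strictRank t i < k} :=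
        mul_measure_univ_le_sum_measure_strictRank_lt μ hk
    _ = Fintype.card ι * μ {t | strictRank t j < k} := by
      simp [measure_strictRank_lt_eq hμ k _ j]

end Exchangeable

theorem exchangeable_quantile_inflation_general
    {Ω : Type*} [MeasurableSpace Ω] (P : Measure Ω) [IsProbabilityMeasure P]
    (n : ℕ) (S : Fin (n + 1) → Ω → ℝ)
    (hmeas : ∀ i, Measurable (S i))
    (hexch : ∀ π : Equiv.Perm (Fin (n + 1)),
      Measure.map (fun ω => fun i => S (π i) ω) P
        = Measure.map (fun ω => fun i => S i ω) P)
    (k : ℕ) (hkn : k ≤ n) :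
    ENNReal.ofReal (k / (n + 1)) ≤
      P {ω | S (Fin.last n) ω ≤ kthSmallest (fun i : Fin n => S i.castSucc ω) k} := by
  set X : Ω → Fin (n + 1) → ℝ := fun ω i => S i ω
  have hX : Measurable X := measurable_pi_lambda _ hmeas
  have hinv (π : Equiv.Perm (Fin (n + 1))) : (P.map X).map (· ∘ π) = P.map X := by
    rw [Measure.map_map (by fun_prop) hX]
    exact hexch π
  have hbound := mul_measure_univ_le_card_mul_measure_strictRank_lt hinv
    (by simpa using hkn.trans n.le_succ) (Fin.last n)
  rw [Measure.map_apply hX (measurableSet_strictRank_lt _ k), Measure.map_apply hX .univ,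
    Set.preimage_univ, measure_univ, mul_one, Fintype.card_fin] at hbound
  have hevent : X ⁻¹' {t | strictRank t (Fin.last n) < k} ⊆
      {ω | S (Fin.last n) ω ≤ kthSmallest (fun i : Fin n => S i.castSucc ω) k} := by
    intro ω hω
    refine le_kthSmallest_of_card_lt _ hkn (lt_of_le_of_lt ?_ hω)
    exact card_le_card_of_injOn Fin.castSucc (by simp [Set.MapsTo, X])
      (Fin.castSucc_injective n).injOn
  calc ENNReal.ofReal (k / (n + 1)) = k / (n + 1 : ENNReal) := by
        rw [ENNReal.ofReal_div_of_pos n.cast_add_one_pos]; norm_cast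
    _ ≤ P (X ⁻¹' {t | strictRank t (Fin.last n) < k}) :=
        ENNReal.div_le_of_le_mul' (by exact_mod_cast hbound)
    _ ≤ _ := measure_mono hevent

/-- **Quantile-inflation lemma (Lemma 2 of Romano et al.), lower bound.** -/
theorem exchangeable_quantile_inflation
    {Ω : Type*} [MeasurableSpace Ω] (P : Measure Ω) [IsProbabilityMeasure P]
    (n : ℕ) (S : Fin (n + 1) → Ω → ℝ)
    (hmeas : ∀ i, Measurable (S i))
    (hexch : ∀ π : Equiv.Perm (Fin (n + 1)),
      Measure.map (fun ω => fun i => S (π i) ω) P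
        = Measure.map (fun ω => fun i => S i ω) P)
    (k : ℕ) (hk1 : 1 ≤ k) (hkn : k ≤ n) :
    ENNReal.ofReal (k / (n + 1)) ≤
      P {ω | S (Fin.last n) ω ≤ kthSmallest (fun i : Fin n => S i.castSucc ω) k} :=
  exchangeable_quantile_inflation_general P n S hmeas hexch k hkn
end
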